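/- Auxiliary limit representation for the m-dimensional quadratic equation in Banach spaces: if f: E → Y satisfies ‖f(∑x_i) + ∑_{i<j} f(x_i − x_j) − m∑f(x_i)‖ ≤ φ(x₁,…,x_m) with lim_{n→∞} φ(x, nx, …, nx) = 0, then for every x ∈ E, f(x) = lim_{n→∞} [ (1/m)f((1+mn−n)x) + ((m−1)/m)f((1−n)x) − (m−1)f(nx) ] in the norm of Y. -/

import Mathlib

/-!
Substitute `x₁ = x`, `x₂ = ⋯ = x_m = n x` in the functional inequality. Of the `m(m-1)/2`
differences `x_i - x_j` only the `m - 1` with `i = 1` are nonzero, so once `f 0 = 0` the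
inequality reads
`‖f((1 + (m-1)n)x) + (m-1) f((1-n)x) - m f(x) - m(m-1) f(nx)‖ ≤ φ(x, nx, …, nx)`;
dividing by `m`, the distance from `f x` to the `n`-th approximant is at most
`φ(x, nx, …, nx)/m → 0`.
The value `f 0 = 0` comes from the all-zero substitution, where `φ` vanishes (its sequence at
`x = 0` is constant) and the coefficient `1 + m(m-1)/2 - m²` of `f 0` is nonzero.
-/

open Filter Topology Finset

section QuadraticDefect

variable {ι X Y : Type*} [Fintype ι] [LinearOrder ι] [AddCommGroup X] [AddCommGroup Y]

def quadraticDefect (f : X → Y) (x : ι → X) : Y :=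
  f (∑ i, x i) + ∑ q ∈ univ.filter (fun q : ι × ι => q.1 < q.2), f (x q.1 - x q.2)
    - Fintype.card ι • ∑ i, f (x i)

omit [LinearOrder ι] in
theorem sum_ite_eq_add_card_sub_one_nsmul {M : Type*} [AddCommMonoid M] [DecidableEq ι]
    (i₀ : ι) (a b : M) :
    ∑ i, (if i = i₀ then a else b) = a + (Fintype.card ι - 1) • b := by
  rw [← add_sum_erase _ _ (mem_univ i₀), if_pos rfl,
    sum_congr rfl fun i hi => if_neg (ne_of_mem_erase hi), sum_const,
    card_erase_of_mem (mem_univ i₀), card_univ]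

theorem card_filter_lt_and_fst_eq_of_isBot {i₀ : ι} (hi₀ : IsBot i₀) :
    #(univ.filter (fun q : ι × ι => q.1 < q.2 ∧ q.1 = i₀)) = Fintype.card ι - 1 := by
  rw [← card_univ, ← card_erase_of_mem (mem_univ i₀)]
  refine card_nbij' Prod.snd (i₀, ·) ?_ ?_ ?_ ?_
  · rintro ⟨i, j⟩ hq
    simp only [coe_filter, mem_univ, true_and, Set.mem_ofPred_eq] at hq
    obtain ⟨hlt, rfl⟩ := hq
    simpa using hlt.ne'
  · intro j hj
    simpa using lt_of_le_of_ne (hi₀ j) (Ne.symm (by simpa using hj))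
  · rintro ⟨i, j⟩ hq
    simp only [coe_filter, mem_univ, true_and, Set.mem_ofPred_eq] at hq
    simp [hq.2]
  · intro j _
    rfl

theorem sum_filter_lt_sub_ite_of_isBot (g : X → Y) (hg : g 0 = 0) {i₀ : ι} (hi₀ : IsBot i₀)
    (a b : X) :
    ∑ q ∈ univ.filter (fun q : ι × ι => q.1 < q.2),
        g ((if q.1 = i₀ then a else b) - (if q.2 = i₀ then a else b))
      = (Fintype.card ι - 1) • g (a - b) := by
  have hterm : ∀ q ∈ univ.filter (fun q : ι × ι => q.1 < q.2),
      g ((if q.1 = i₀ then a else b) - (if q.2 = i₀ then a else b))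
        = if q.1 = i₀ then g (a - b) else 0 := by
    intro q hq
    have hq₂ : q.2 ≠ i₀ := fun h => not_lt_of_ge (hi₀ q.1) (h ▸ (mem_filter.mp hq).2)
    split_ifs <;> simp [hg]
  rw [sum_congr rfl hterm, sum_ite, sum_const_zero, add_zero, sum_const, filter_filter,
    card_filter_lt_and_fst_eq_of_isBot hi₀]

theorem quadraticDefect_ite_of_isBot {f : X → Y} (hf : f 0 = 0) {i₀ : ι} (hi₀ : IsBot i₀)
    (a b : X) :
    quadraticDefect f (fun i => if i = i₀ then a else b)
      = f (a + (Fintype.card ι - 1) • b) + (Fintype.card ι - 1) • f (a - b)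
        - Fintype.card ι • (f a + (Fintype.card ι - 1) • f b) := by
  simp only [quadraticDefect, apply_ite f, sum_ite_eq_add_card_sub_one_nsmul,
    sum_filter_lt_sub_ite_of_isBot f hf hi₀]

theorem card_filter_lt_add_one_lt_mul_self (h : 2 ≤ Fintype.card ι) :
    #(univ.filter (fun q : ι × ι => q.1 < q.2)) + 1 < Fintype.card ι * Fintype.card ι := by
  have : #(univ.filter (fun q : ι × ι => q.1 < q.2)) ≤ #(univ : Finset ι).offDiag :=
    card_le_card fun q hq => by simpa using (mem_filter.mp hq).2.ne
  rw [offDiag_card, card_univ] at this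
  have : Fintype.card ι ≤ Fintype.card ι * Fintype.card ι := Nat.le_mul_self _
  omega

theorem map_zero_of_quadraticDefect_zero [IsAddTorsionFree Y] {f : X → Y}
    (h : 2 ≤ Fintype.card ι) (hf : quadraticDefect f (0 : ι → X) = 0) : f 0 = 0 := by
  have hlt := card_filter_lt_add_one_lt_mul_self (ι := ι) h
  set k := Fintype.card ι
  set s := #(univ.filter (fun q : ι × ι => q.1 < q.2))
  have hsmul : (k * k - (s + 1)) • f 0 = 0 := by
    simp only [quadraticDefect, Pi.zero_apply, sum_const_zero, sub_zero, sum_const, card_univ] at hf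
    rw [sub_nsmul _ hlt.le, mul_nsmul, add_nsmul, one_nsmul, ← sub_eq_zero.mp hf]
    abel
  exact (nsmul_eq_zero_iff_right (by omega)).mp hsmul

end QuadraticDefect

theorem approximant_sub_eq_inv_smul {X Y : Type*} [AddCommGroup X] [AddCommGroup Y]
    [Module ℝ Y] (f : X → Y) {m : ℕ} (hm : 1 ≤ m) (n : ℕ) (x : X) :
    (m : ℝ)⁻¹ • f ((1 + m * n - n) • x) + (((m : ℝ) - 1) / m) • f ((1 - (n : ℤ)) • x)
        - ((m : ℝ) - 1) • f (n • x) - f x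
      = (m : ℝ)⁻¹ • (f (x + (m - 1) • n • x) + (m - 1) • f (x - n • x)
        - m • (f x + (m - 1) • f (n • x))) := by
  have hX : (1 + m * n - n) • x = x + (m - 1) • n • x := by
    have : n ≤ m * n := Nat.le_mul_of_pos_left n hm
    rw [show 1 + m * n - n = 1 + (m - 1) * n by rw [Nat.sub_one_mul]; omega, add_nsmul, one_nsmul,
      mul_nsmul, smul_comm]
  have hZ : (1 - (n : ℤ)) • x = x - n • x := by
    rw [sub_zsmul, one_zsmul, natCast_zsmul, sub_eq_add_neg]
  have hm0 : (m : ℝ) ≠ 0 := by positivity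
  rw [hX, hZ]
  match_scalars <;> push_cast [Nat.cast_sub hm] <;> field_simp

theorem mdim_quadratic_limit_representation_banach
    {X : Type*} [AddCommGroup X]
    {Y : Type*} [NormedAddCommGroup Y] [NormedSpace ℝ Y]
    (E : Set X)
    (hEsub : ∀ x ∈ E, ∀ y ∈ E, x - y ∈ E)
    (m : ℕ) (hm : 2 ≤ m)
    (φ : (Fin m → X) → ℝ)
    (hφ1 : ∀ x ∈ E,
      Tendsto (fun n : ℕ => φ (fun i => if i = ⟨0, by omega⟩ then x else n • x))
        atTop (𝓝 0))
    (f : X → Y)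
    (hf : ∀ x : Fin m → X, (∀ i, x i ∈ E) →
      ‖f (∑ i, x i)
          + ∑ q ∈ Finset.univ.filter (fun q : Fin m × Fin m => q.1 < q.2),
              f (x q.1 - x q.2)
          - m • ∑ i, f (x i)‖ ≤ φ x) :
    ∀ x ∈ E,
      Tendsto (fun n : ℕ =>
          (m : ℝ)⁻¹ • f ((1 + m * n - n) • x)
            + (((m : ℝ) - 1) / m) • f ((1 - (n : ℤ)) • x)
            - ((m : ℝ) - 1) • f (n • x)) atTop (𝓝 (f x)) := by
  intro x hx
  let G := AddSubgroup.ofSub E ⟨x, hx⟩ fun a ha b hb => sub_eq_add_neg a b ▸ hEsub a ha b hb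
  have hφ0 : φ 0 = 0 := by
    simpa [tendsto_const_nhds_iff, Pi.zero_def] using hφ1 0 G.zero_mem
  have : IsAddTorsionFree Y := .of_isTorsionFree ℝ Y
  have hf0 : f 0 = 0 := by
    refine map_zero_of_quadraticDefect_zero (ι := Fin m) (by simpa using hm)
      (norm_le_zero_iff.mp ?_)
    simpa [quadraticDefect, hφ0] using hf 0 fun _ => G.zero_mem
  have hbound : ∀ n : ℕ, ‖(m : ℝ)⁻¹ • f ((1 + m * n - n) • x)
        + (((m : ℝ) - 1) / m) • f ((1 - (n : ℤ)) • x) - ((m : ℝ) - 1) • f (n • x) - f x‖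
      ≤ (m : ℝ)⁻¹ * φ (fun i => if i = ⟨0, by omega⟩ then x else n • x) := by
    intro n
    have hdefect := quadraticDefect_ite_of_isBot hf0 (i₀ := (⟨0, by omega⟩ : Fin m))
      (fun j => Nat.zero_le j.val) x (n • x)
    rw [Fintype.card_fin] at hdefect
    rw [approximant_sub_eq_inv_smul f (by omega), ← hdefect, norm_smul,
      Real.norm_of_nonneg (by positivity)]
    gcongr
    simpa only [quadraticDefect, Fintype.card_fin] using
      hf _ fun i => by split_ifs; exacts [hx, G.nsmul_mem hx n]
  rw [tendsto_iff_norm_sub_tendsto_zero]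
  exact squeeze_zero (fun _ => norm_nonneg _) hbound
    (by simpa using (hφ1 x hx).const_mul (m : ℝ)⁻¹)
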